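/- Suppose the monic real cubic F(ξ) = ξ³ + A₁ξ² + A₂ξ + A₃ satisfies D(F) < 0, A₁ ≥ 0, A₂ ≥ 0, A₃ > 0, and let 0 < m < 2/3. Then every root ξ of F (real or complex) satisfies |arg(ξ)| > mπ/2. -/

import Mathlib

/-!
A root `ξ = β + iγ` with `β > 0` cannot be real, since the cubic is positive on `(0, ∞)`. So
`γ ≠ 0`, and the imaginary part of the equation, divided by `γ`, gives
`γ² = 3β² + 2A₁β + A₂ ≥ 3β²`. Hence `Re ξ ≤ |ξ| / 2` for every root, i.e. `|arg ξ| ≥ π/3 > mπ/2`.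
-/

open Complex

theorem Complex.le_abs_arg_of_re_le_norm_mul_cos {z : ℂ} {θ : ℝ} (hz : z ≠ 0) (hθ₀ : 0 ≤ θ)
    (hθ : θ ≤ Real.pi) (h : z.re ≤ ‖z‖ * Real.cos θ) : θ ≤ |arg z| := by
  have hcos : Real.cos |arg z| ≤ Real.cos θ := by
    rw [Real.cos_abs, cos_arg hz, div_le_iff₀' (norm_pos_iff.mpr hz)]
    exact h
  exact (Real.strictAntiOn_cos.le_iff_ge ⟨abs_nonneg _, abs_arg_le_pi z⟩ ⟨hθ₀, hθ⟩).1 hcos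

theorem re_le_half_norm_of_cubic_eq_zero {A₁ A₂ A₃ : ℝ} (hA₁ : 0 ≤ A₁) (hA₂ : 0 ≤ A₂)
    (hA₃ : 0 ≤ A₃) {ξ : ℂ} (h : ξ ^ 3 + A₁ * ξ ^ 2 + A₂ * ξ + A₃ = 0) : ξ.re ≤ ‖ξ‖ / 2 := by
  obtain ⟨β, γ⟩ := ξ
  have hre : β ^ 3 - 3 * β * γ ^ 2 + A₁ * (β ^ 2 - γ ^ 2) + A₂ * β + A₃ = 0 := by
    have := congrArg re h
    simp only [pow_succ, pow_zero, one_mul, add_re, mul_re, mul_im, ofReal_re, ofReal_im,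
      zero_mul, sub_zero, zero_re] at this
    linear_combination this
  have him : γ * (3 * β ^ 2 - γ ^ 2 + 2 * A₁ * β + A₂) = 0 := by
    have := congrArg im h
    simp only [pow_succ, pow_zero, one_mul, add_im, mul_im, mul_re, ofReal_re, ofReal_im,
      zero_mul, add_zero, zero_im] at this
    linear_combination this
  show β ≤ ‖(⟨β, γ⟩ : ℂ)‖ / 2
  rcases le_or_gt β 0 with hβ | hβ
  · linarith [norm_nonneg (⟨β, γ⟩ : ℂ)]
  have hγ : γ ≠ 0 := by
    rintro rfl
    nlinarith [pow_pos hβ 3, mul_nonneg hA₁ (sq_nonneg β), mul_nonneg hA₂ hβ.le]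
  have h3 : 3 * β ^ 2 ≤ γ ^ 2 := by
    nlinarith [(mul_eq_zero.mp him).resolve_left hγ, mul_nonneg hA₁ hβ.le]
  have h4 : (2 * β) ^ 2 ≤ ‖(⟨β, γ⟩ : ℂ)‖ ^ 2 := by
    rw [Complex.sq_norm, normSq_mk]; nlinarith
  linarith [(pow_le_pow_iff_left₀ (by positivity) (norm_nonneg _) two_ne_zero).1 h4]

theorem stmt_16_general (A₁ A₂ A₃ m : ℝ)
    (hA₁ : 0 ≤ A₁) (hA₂ : 0 ≤ A₂) (hA₃ : 0 < A₃)
    (hm' : m < 2/3) :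
    ∀ ξ : ℂ, ξ^3 + (A₁:ℂ)*ξ^2 + (A₂:ℂ)*ξ + (A₃:ℂ) = 0 →
      m * Real.pi / 2 < |Complex.arg ξ| := by
  intro ξ h
  have hξ : ξ ≠ 0 := by
    rintro rfl
    simp [hA₃.ne'] at h
  have harg : Real.pi / 3 ≤ |arg ξ| := by
    refine le_abs_arg_of_re_le_norm_mul_cos hξ (by positivity) (by linarith [Real.pi_pos]) ?_
    rw [Real.cos_pi_div_three]
    linarith [re_le_half_norm_of_cubic_eq_zero hA₁ hA₂ hA₃.le h]
  linarith [mul_lt_mul_of_pos_right hm' Real.pi_pos]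

/-- If `D(F) < 0`, `A₁ ≥ 0`, `A₂ ≥ 0`, `A₃ > 0` and `0 < m < 2/3`, then every
root `ξ` of the monic real cubic satisfies `|arg ξ| > mπ/2`. -/
theorem stmt_16 (A₁ A₂ A₃ m : ℝ)
    (hD : 18*A₁*A₂*A₃ + (A₁*A₂)^2 - 4*A₃*A₁^3 - 4*A₂^3 - 27*A₃^2 < 0)
    (hA₁ : 0 ≤ A₁) (hA₂ : 0 ≤ A₂) (hA₃ : 0 < A₃)
    (hm : 0 < m) (hm' : m < 2/3) :
    ∀ ξ : ℂ, ξ^3 + (A₁:ℂ)*ξ^2 + (A₂:ℂ)*ξ + (A₃:ℂ) = 0 →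
      m * Real.pi / 2 < |Complex.arg ξ| :=
  stmt_16_general A₁ A₂ A₃ m hA₁ hA₂ hA₃ hm'
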